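/- Let n ≥ m ≥ 2 and let σ ∈ Sₙ be a permutation with exactly n − m fixed points. Then there exist ℓ ≤ m/2 transpositions τ₁,…,τ_ℓ such that τ_ℓ ∘ ⋯ ∘ τ₁ ∘ σ has exactly n − m fixed points and its nontrivial cycles are: m/2 disjoint 2-cycles if m is even, or (m−3)/2 disjoint 2-cycles together with one disjoint 3-cycle if m is odd. -/

import Mathlib

/-!
Let `E π` be the number of cycles of even length of `π`. Multiplying on the left by a single
transposition can raise `E` by one without changing the support: a cycle `(x y z …)` of length
`k ≥ 4` splits into `(x y)` and a `(k - 2)`-cycle under `swap x z`, and two odd cycles merge into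
one even cycle under the transposition of a point of each. While `σ` has a cycle of length `≥ 4`
or two odd cycles, apply such a move. What remains has only 2-cycles and at most one 3-cycle, and
the number of transpositions used is at most its `E`, i.e. at most half its support.
-/

open Equiv Finset

theorem Multiset.eq_replicate_two_add_replicate_three (s : Multiset ℕ)
    (h : ∀ k ∈ s, k = 2 ∨ k = 3) :
    s = Multiset.replicate (s.countP Even) 2 + Multiset.replicate (s.countP Odd) 3 := by
  conv_lhs => rw [← Multiset.filter_add_not Even s]
  simp only [Nat.not_even_iff_odd]
  congr 1 <;> rw [Multiset.eq_replicate, Multiset.countP_eq_card_filter] <;>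
    refine ⟨rfl, fun k hk => ?_⟩ <;> rw [Multiset.mem_filter] at hk <;>
    rcases h k hk.1 with rfl | rfl <;> simp_all [Nat.even_iff, Nat.odd_iff]

namespace Equiv.Perm

variable {α : Type*} [DecidableEq α] [Fintype α]

theorem IsCycle.apply_apply_ne_self {f : Perm α} (hf : f.IsCycle) (h3 : 3 ≤ #f.support) {x : α}
    (hx : f x ≠ x) : f (f x) ≠ x := fun h => by
  rw [hf.eq_swap_of_apply_apply_eq_self hx h, card_support_swap hx.symm] at h3
  omega

theorem IsCycle.exists_isSwap_cycleType_mul {c : Perm α} (hc : c.IsCycle) (h4 : 4 ≤ #c.support) :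
    ∃ τ : Perm α, τ.IsSwap ∧ (τ * c).support = c.support ∧
      (τ * c).cycleType = {2, #c.support - 2} := by
  obtain ⟨x, hx, -⟩ := id hc
  set y := c x
  set c₁ := swap x y * c
  have hsupp₁ : c₁.support = c.support \ {x} :=
    support_swap_mul_eq c x (hc.apply_apply_ne_self (by omega) hx)
  have hy : y ∈ c₁.support := by
    rw [hsupp₁, mem_sdiff, mem_singleton]
    exact ⟨apply_mem_support.2 (mem_support.2 hx), hx⟩
  have hcard₁ : #c₁.support = #c.support - 1 := by
    rw [hsupp₁, card_sdiff_of_subset (singleton_subset_iff.2 (mem_support.2 hx)), card_singleton]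
  have hc₁ : c₁.IsCycle := hc.swap_mul hx (hc.apply_apply_ne_self (by omega) hx)
  have hy₁ : c₁ y ≠ y := mem_support.1 hy
  set c₂ := swap y (c₁ y) * c₁
  have hc₂ : c₂.IsCycle := hc₁.swap_mul hy₁ (hc₁.apply_apply_ne_self (by omega) hy₁)
  have hsupp₂ : c₂.support = c₁.support \ {y} :=
    support_swap_mul_eq c₁ y (hc₁.apply_apply_ne_self (by omega) hy₁)
  have hcard₂ : #c₂.support = #c.support - 2 := by
    rw [hsupp₂, card_sdiff_of_subset (singleton_subset_iff.2 hy), card_singleton]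
    omega
  have hdisj : Disjoint (swap x y) c₂ := by
    rw [disjoint_iff_disjoint_support, support_swap hx.symm, hsupp₂, hsupp₁]
    simp [Finset.disjoint_left]
  -- `τ = swap x (c y)`, written as a conjugate so that `τ * c = swap x y * c₂` is associativity
  have hτ : swap x y * swap y (c₁ y) * swap x y * c = swap x y * c₂ := by
    simp only [c₂, c₁, mul_assoc]
  refine ⟨swap x y * swap y (c₁ y) * swap x y, ?_, ?_, ?_⟩
  · refine ⟨swap x y y, swap x y (c₁ y), (swap x y).injective.ne hy₁.symm, ?_⟩
    rw [swap_apply_apply, swap_inv]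
  · rw [hτ, hdisj.support_mul, support_swap hx.symm, hsupp₂, hsupp₁]
    ext w
    simp only [mem_union, mem_insert, mem_singleton, mem_sdiff]
    constructor
    · rintro ((rfl | rfl) | ⟨⟨hw, -⟩, -⟩)
      · exact mem_support.2 hx
      · exact apply_mem_support.2 (mem_support.2 hx)
      · exact hw
    · intro hw
      tauto
  · rw [hτ, hdisj.cycleType_mul, (isCycle_swap hx.symm).cycleType, hc₂.cycleType,
      card_support_swap hx.symm, hcard₂]
    rfl

theorem IsCycle.pow_apply_ne_self {c : Perm α} (hc : c.IsCycle) {x : α} (hx : x ∈ c.support)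
    {i : ℕ} (hi0 : 0 < i) (hi : i < #c.support) : (c ^ i) x ≠ x := fun h => by
  have := orderOf_le_of_pow_eq_one hi0 ((hc.pow_eq_one_iff' (mem_support.1 hx)).2 h)
  rw [hc.orderOf] at this
  omega

theorem swap_mul_mul_apply_pow_apply {c d : Perm α} (hcd : Disjoint c d) {x : α}
    (hx : x ∈ c.support) (y : α) (i : ℕ) :
    (swap x y * (c * d)) ((c ^ i) x) = swap x y ((c ^ (i + 1)) x) := by
  have hd : d ((c ^ i) x) = (c ^ i) x :=
    notMem_support.1 (hcd.disjoint_support.notMem_of_mem_left_finset (pow_apply_mem_support.2 hx))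
  rw [mul_apply, mul_apply, hd, pow_succ', mul_apply]

theorem pow_apply_swap_mul_mul {c d : Perm α} (hc : c.IsCycle) (hcd : Disjoint c d) {x y : α}
    (hx : x ∈ c.support) (hy : y ∈ d.support) {i : ℕ} (hi : i < #c.support) :
    ((swap x y * (c * d)) ^ i) x = (c ^ i) x := by
  induction i with
  | zero => rfl
  | succ i ih =>
    have hmem : (c ^ (i + 1)) x ∈ c.support := pow_apply_mem_support.2 hx
    rw [pow_succ', mul_apply, ih (by omega), swap_mul_mul_apply_pow_apply hcd hx]
    exact swap_apply_of_ne_of_ne (hc.pow_apply_ne_self hx (by omega) hi)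
      (fun h => hcd.disjoint_support.notMem_of_mem_left_finset hmem (h ▸ hy))

theorem pow_card_support_apply_swap_mul_mul {c d : Perm α} (hc : c.IsCycle) (hcd : Disjoint c d)
    {x y : α} (hx : x ∈ c.support) (hy : y ∈ d.support) :
    ((swap x y * (c * d)) ^ #c.support) x = y := by
  obtain ⟨k, hk⟩ : ∃ k, #c.support = k + 1 :=
    Nat.exists_eq_add_one.2 (card_pos.2 ⟨x, hx⟩)
  rw [hk, pow_succ', mul_apply, pow_apply_swap_mul_mul hc hcd hx hy (by omega),
    swap_mul_mul_apply_pow_apply hcd hx, ← hk, ← hc.orderOf, pow_orderOf_eq_one, one_apply,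
    swap_apply_left]

theorem sameCycle_swap_mul_mul {c d : Perm α} (hc : c.IsCycle) (hcd : Disjoint c d) {x y w : α}
    (hx : x ∈ c.support) (hy : y ∈ d.support) (hw : w ∈ c.support) :
    SameCycle (swap x y * (c * d)) x w := by
  obtain ⟨i, hi, rfl⟩ := (hc.sameCycle (mem_support.1 hx) (mem_support.1 hw)).exists_pow_eq'
  rw [hc.orderOf] at hi
  exact ⟨i, by rw [zpow_natCast, pow_apply_swap_mul_mul hc hcd hx hy hi]⟩

theorem isCycle_swap_mul_mul {c d : Perm α} (hc : c.IsCycle) (hd : d.IsCycle) (hcd : Disjoint c d)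
    {x y : α} (hx : x ∈ c.support) (hy : y ∈ d.support) :
    (swap x y * (c * d)).IsCycle ∧ (swap x y * (c * d)).support = c.support ∪ d.support := by
  set e := swap x y * (c * d)
  have hxy : SameCycle e x y :=
    ⟨#c.support, by rw [zpow_natCast, pow_card_support_apply_swap_mul_mul hc hcd hx hy]⟩
  have hall : ∀ w ∈ c.support ∪ d.support, SameCycle e x w := by
    intro w hw
    rcases mem_union.1 hw with hw | hw
    · exact sameCycle_swap_mul_mul hc hcd hx hy hw
    · have hyw := sameCycle_swap_mul_mul hd hcd.symm hy hx hw
      rw [swap_comm, ← hcd.commute.eq] at hyw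
      exact hxy.trans hyw
  have hsub : e.support ⊆ c.support ∪ d.support := by
    intro w hw
    by_contra hw'
    simp only [mem_union, not_or, notMem_support] at hw'
    have hwx : w ≠ x := fun h => mem_support.1 hx (h ▸ hw'.1)
    have hwy : w ≠ y := fun h => mem_support.1 hy (h ▸ hw'.2)
    exact mem_support.1 hw
      (by rw [mul_apply, mul_apply, hw'.2, hw'.1, swap_apply_of_ne_of_ne hwx hwy])
  have hex : e x ≠ x := fun h => hcd.disjoint_support.notMem_of_mem_left_finset hx
    ((pow_apply_eq_self_of_apply_eq_self h _).symm.trans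
      (pow_card_support_apply_swap_mul_mul hc hcd hx hy) ▸ hy)
  refine ⟨⟨x, hex, fun w hw => hall w (hsub (mem_support.2 hw))⟩, subset_antisymm hsub ?_⟩
  intro w hw
  exact mem_support.2 fun h => hex ((hall w hw).apply_eq_self_iff.2 h)

theorem Disjoint.support_mul_mul_eq {τ g h : Perm α} (hgh : Disjoint g h)
    (hτ : (τ * g).support = g.support) :
    (τ * (g * h)).support = (g * h).support ∧
      (τ * (g * h)).cycleType = (τ * g).cycleType + h.cycleType := by
  have hτgh : Disjoint (τ * g) h := hgh.mono hτ.le subset_rfl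
  rw [← mul_assoc, hτgh.support_mul, hτgh.cycleType_mul, hτ, hgh.support_mul]
  exact ⟨rfl, rfl⟩

theorem two_mul_countP_even_cycleType_le (σ : Perm α) :
    2 * σ.cycleType.countP Even ≤ #σ.support := by
  calc 2 * σ.cycleType.countP Even ≤ 2 * Multiset.card σ.cycleType :=
        Nat.mul_le_mul_left 2 (Multiset.countP_le_card _ _)
    _ ≤ σ.cycleType.sum := by
        rw [mul_comm, ← smul_eq_mul]
        exact Multiset.card_nsmul_le_sum fun _ => two_le_of_mem_cycleType
    _ = #σ.support := sum_cycleType σ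

theorem exists_isSwap_countP_even_mul_of_four_le {σ : Perm α} {k : ℕ} (hk : k ∈ σ.cycleType)
    (h4 : 4 ≤ k) : ∃ τ : Perm α, τ.IsSwap ∧ (τ * σ).support = σ.support ∧
      (τ * σ).cycleType.countP Even = σ.cycleType.countP Even + 1 := by
  obtain ⟨c, ρ, rfl, hcρ, hc, rfl⟩ := mem_cycleType_iff.1 hk
  obtain ⟨τ, hτ, hsupp, htype⟩ := hc.exists_isSwap_cycleType_mul h4
  obtain ⟨hsupp', htype'⟩ := hcρ.support_mul_mul_eq hsupp
  refine ⟨τ, hτ, hsupp', ?_⟩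
  rw [htype', htype, hcρ.cycleType_mul, hc.cycleType]
  have : Even (#c.support - 2) ↔ Even #c.support := by
    rw [Nat.even_sub (by omega)]; simp
  simp [Multiset.countP_cons, Multiset.insert_eq_cons, this]

theorem exists_isSwap_countP_even_mul_of_two_le_countP_odd {σ : Perm α}
    (h2 : 2 ≤ σ.cycleType.countP Odd) : ∃ τ : Perm α, τ.IsSwap ∧ (τ * σ).support = σ.support ∧
      (τ * σ).cycleType.countP Even = σ.cycleType.countP Even + 1 := by
  obtain ⟨a, ha, hodda⟩ := Multiset.countP_pos.1 (by omega : 0 < σ.cycleType.countP Odd)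
  obtain ⟨c, ρ, rfl, hcρ, hc, rfl⟩ := mem_cycleType_iff.1 ha
  rw [hcρ.cycleType_mul, hc.cycleType, Multiset.singleton_add,
    Multiset.countP_cons_of_pos _ hodda] at h2
  obtain ⟨b, hb, hoddb⟩ := Multiset.countP_pos.1 (by omega : 0 < ρ.cycleType.countP Odd)
  obtain ⟨d, ρ', rfl, hdρ', hd, rfl⟩ := mem_cycleType_iff.1 hb
  have hcd : Disjoint c d :=
    hcρ.mono subset_rfl (hdρ'.support_mul ▸ subset_union_left)
  have hcρ' : Disjoint c ρ' :=
    hcρ.mono subset_rfl (hdρ'.support_mul ▸ subset_union_right)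
  have hcdρ' : Disjoint (c * d) ρ' := hcρ'.mul_left hdρ'
  obtain ⟨x, hx⟩ := hc.nonempty_support
  obtain ⟨y, hy⟩ := hd.nonempty_support
  obtain ⟨hcycle, hsupp⟩ := isCycle_swap_mul_mul hc hd hcd hx hy
  obtain ⟨hsupp', htype'⟩ := hcdρ'.support_mul_mul_eq (hsupp.trans hcd.support_mul.symm)
  rw [← mul_assoc c d ρ']
  have hxy : x ≠ y := fun h => hcd.disjoint_support.notMem_of_mem_left_finset hx (h ▸ hy)
  refine ⟨swap x y, ⟨x, y, hxy, rfl⟩, hsupp', ?_⟩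
  rw [htype', hcycle.cycleType, hcdρ'.cycleType_mul, hcd.cycleType_mul, hc.cycleType,
    hd.cycleType, hsupp, card_union_of_disjoint hcd.disjoint_support]
  simp [hodda.add_odd hoddb, Nat.not_even_iff_odd.2 hodda, Nat.not_even_iff_odd.2 hoddb]

theorem exists_isSwap_list_prod_mul_cycleType_le_three (σ : Perm α) :
    ∃ l : List (Perm α), (∀ τ ∈ l, τ.IsSwap) ∧ (l.prod * σ).support = σ.support ∧
      l.length + σ.cycleType.countP Even ≤ (l.prod * σ).cycleType.countP Even ∧
      (∀ k ∈ (l.prod * σ).cycleType, k ≤ 3) ∧ (l.prod * σ).cycleType.countP Odd ≤ 1 := by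
  induction hn : #σ.support - 2 * σ.cycleType.countP Even using Nat.strong_induction_on
    generalizing σ with
  | _ n ih =>
    by_cases hgood : (∀ k ∈ σ.cycleType, k ≤ 3) ∧ σ.cycleType.countP Odd ≤ 1
    · exact ⟨[], by simp, by simp, by simp, by simpa using hgood⟩
    obtain ⟨τ, hτ, hsupp, heven⟩ : ∃ τ : Perm α, τ.IsSwap ∧ (τ * σ).support = σ.support ∧
        (τ * σ).cycleType.countP Even = σ.cycleType.countP Even + 1 := by
      by_cases h3 : ∀ k ∈ σ.cycleType, k ≤ 3
      · exact exists_isSwap_countP_even_mul_of_two_le_countP_odd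
          (by have := not_and.1 hgood h3; omega)
      · obtain ⟨k, hk, h4⟩ := not_forall₂.1 h3
        exact exists_isSwap_countP_even_mul_of_four_le hk (by omega)
    have hlt : #(τ * σ).support - 2 * (τ * σ).cycleType.countP Even < n := by
      have := two_mul_countP_even_cycleType_le (τ * σ)
      rw [hsupp, heven] at this ⊢
      omega
    obtain ⟨l, hl, hlsupp, hlen, hgood'⟩ := ih _ hlt (τ * σ) rfl
    have hprod : (l ++ [τ]).prod * σ = l.prod * (τ * σ) := by simp [mul_assoc]
    refine ⟨l ++ [τ], ?_, ?_, ?_, ?_⟩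
    · simpa [or_imp, forall_and] using ⟨hl, hτ⟩
    · rw [hprod, hlsupp, hsupp]
    · rw [hprod, List.length_append, List.length_singleton]
      omega
    · rwa [hprod]

theorem cycleType_eq_replicate_of_le_three {π : Perm α} (h3 : ∀ k ∈ π.cycleType, k ≤ 3)
    (hodd : π.cycleType.countP Odd ≤ 1) :
    if Even #π.support then π.cycleType = Multiset.replicate (#π.support / 2) 2
    else π.cycleType = Multiset.replicate ((#π.support - 3) / 2) 2 + {3} := by
  have hs := Multiset.eq_replicate_two_add_replicate_three π.cycleType fun k hk => by
    have := two_le_of_mem_cycleType hk; have := h3 k hk; omega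
  have hsum := sum_cycleType π
  rw [hs, Multiset.sum_add, Multiset.sum_replicate, Multiset.sum_replicate, smul_eq_mul,
    smul_eq_mul] at hsum
  interval_cases h : π.cycleType.countP Odd
  · rw [if_pos ⟨π.cycleType.countP Even, by omega⟩, hs,
      show #π.support / 2 = π.cycleType.countP Even by omega, Multiset.replicate_zero, add_zero]
  · rw [if_neg (Nat.not_even_iff_odd.2 ⟨π.cycleType.countP Even + 1, by omega⟩), hs,
      show (#π.support - 3) / 2 = π.cycleType.countP Even by omega, Multiset.replicate_one]

theorem card_filter_apply_eq_self (σ : Perm α) :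
    #(univ.filter fun i => σ i = i) = Fintype.card α - #σ.support := by
  rw [← card_compl]
  congr 1
  ext
  simp [mem_support]

end Equiv.Perm

theorem reach_good_permutation_general (n m : ℕ) (hmn : m ≤ n)
    (σ : Equiv.Perm (Fin n))
    (hfix : (Finset.univ.filter fun i => σ i = i).card = n - m) :
    ∃ l : List (Equiv.Perm (Fin n)), (∀ τ ∈ l, τ.IsSwap) ∧ 2 * l.length ≤ m ∧
      ((Finset.univ.filter fun i => (l.prod * σ) i = i).card = n - m) ∧
      (if Even m then (l.prod * σ).cycleType = Multiset.replicate (m / 2) 2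
       else (l.prod * σ).cycleType = Multiset.replicate ((m - 3) / 2) 2 + {3}) := by
  have hσ : #σ.support = m := by
    have := card_le_univ σ.support
    rw [σ.card_filter_apply_eq_self, Fintype.card_fin] at hfix
    rw [Fintype.card_fin] at this
    omega
  obtain ⟨l, hl, hsupp, hlen, h3, hodd⟩ := σ.exists_isSwap_list_prod_mul_cycleType_le_three
  refine ⟨l, hl, ?_, ?_, ?_⟩
  · have := (l.prod * σ).two_mul_countP_even_cycleType_le
    rw [hsupp, hσ] at this
    omega
  · rw [Equiv.Perm.card_filter_apply_eq_self, hsupp, hσ, Fintype.card_fin]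
  · simpa only [hsupp, hσ] using Equiv.Perm.cycleType_eq_replicate_of_le_three h3 hodd

theorem reach_good_permutation (n m : ℕ) (hm : 2 ≤ m) (hmn : m ≤ n)
    (σ : Equiv.Perm (Fin n))
    (hfix : (Finset.univ.filter fun i => σ i = i).card = n - m) :
    ∃ l : List (Equiv.Perm (Fin n)), (∀ τ ∈ l, τ.IsSwap) ∧ 2 * l.length ≤ m ∧
      ((Finset.univ.filter fun i => (l.prod * σ) i = i).card = n - m) ∧
      (if Even m then (l.prod * σ).cycleType = Multiset.replicate (m / 2) 2
       else (l.prod * σ).cycleType = Multiset.replicate ((m - 3) / 2) 2 + {3}) :=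
  reach_good_permutation_general n m hmn σ hfix
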